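/- Fix $q \in \mathbb{Z}$ and let $\nu_q: \mathcal{B}([0,2\pi)) \to \mathbb{C}$ be a $\sigma$-additive set function such that $\nu_q(X \oplus \theta) = e^{iq\theta}\nu_q(X)$ for all Borel sets $X \subseteq [0,2\pi)$ and all $\theta \in [0,2\pi)$ (where $\oplus$ is addition modulo $2\pi$), and such that $\nu_q([0,2\pi)) = \delta_{0,q}$. Then there exists $c_q \in \mathbb{C}$, with $c_0 = 1$, such that $\nu_q(X) = c_q\, (2\pi)^{-1}\int_X e^{iq\theta}\, d\theta$ for all Borel $X \subseteq [0,2\pi)$. -/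

import Mathlib

/-!
For `θ ∈ [0, 2π)` covariance gives `e^{-iqθ} ν(X ⊕ θ) = ν(X)`, so averaging over `θ`,
`2π ν(X) = ∫_{[0,2π)} e^{-iqθ} ν(X ⊕ θ) dθ`. Write `ν` as a complex combination of four finite
measures (Jordan decompositions of its real and imaginary parts) and swap the integrals: for fixed
`x`, the substitution `y = x - θ mod 2π` preserves Lebesgue measure on `[0, 2π)` and turns the inner
integral into `e^{-iqx} ∫_X e^{iqy} dy`. Hence `2π ν(X) = c ∫_X e^{iqy} dy` with
`c = ∫_{[0,2π)} e^{-iqx} dν(x)`, which is `ν([0, 2π)) = 1` when `q = 0`.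
-/

open MeasureTheory Complex

/-- Addition by `θ` modulo `2π` on `[0, 2π)`. -/
noncomputable def wrapAdd (θ x : ℝ) : ℝ :=
  if x + θ < 2 * Real.pi then x + θ else x + θ - 2 * Real.pi

open Real Set

lemma measurable_toIcoMod {p : ℝ} (hp : 0 < p) (a : ℝ) : Measurable (toIcoMod hp a) := by
  have : toIcoMod hp a = fun b => b - ⌊(b - a) / p⌋ * p := by
    funext b; rw [toIcoMod, toIcoDiv_eq_floor, zsmul_eq_mul]
  rw [this]
  fun_prop

lemma periodic_cexp_I_mul_intCast_mul (q : ℤ) :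
    Function.Periodic (fun y : ℝ => cexp (I * q * y)) (2 * π) := fun y => by
  simp only [ofReal_add, ofReal_mul, ofReal_ofNat, mul_add, Complex.exp_add]
  rw [show I * q * (2 * π) = q * (2 * π * I) by ring, exp_int_mul_two_pi_mul_I, mul_one]

lemma cexp_I_mul_intCast_mul_toIcoMod (q : ℤ) (a y : ℝ) :
    cexp (I * q * toIcoMod two_pi_pos a y) = cexp (I * q * y) := by
  rw [toIcoMod]
  exact (periodic_cexp_I_mul_intCast_mul q).sub_zsmul_eq _

lemma wrapAdd_eq_toIcoMod {θ y : ℝ} (hθ : θ ∈ Ico 0 (2 * π)) (hy : y ∈ Ico 0 (2 * π)) :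
    wrapAdd θ y = toIcoMod two_pi_pos 0 (y + θ) := by
  obtain ⟨hθ0, hθ2π⟩ := hθ
  obtain ⟨hy0, hy2π⟩ := hy
  unfold wrapAdd
  split_ifs with h
  · exact ((toIcoMod_eq_self _).2 ⟨by linarith, by linarith⟩).symm
  · rw [← toIcoMod_sub, (toIcoMod_eq_self _).2 ⟨by linarith, by linarith⟩]

lemma mem_wrapAdd_image_iff {X : Set ℝ} (hXs : X ⊆ Ico 0 (2 * π)) {θ : ℝ}
    (hθ : θ ∈ Ico 0 (2 * π)) {x : ℝ} :
    x ∈ wrapAdd θ '' X ↔ x ∈ Ico 0 (2 * π) ∧ toIcoMod two_pi_pos 0 (x - θ) ∈ X := by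
  constructor
  · rintro ⟨y, hy, rfl⟩
    rw [wrapAdd_eq_toIcoMod hθ (hXs hy)]
    refine ⟨by simpa using toIcoMod_mem_Ico' two_pi_pos (y + θ), ?_⟩
    convert hy using 1
    refine (toIcoMod_eq_iff _).2 ⟨by simpa using hXs hy, -toIcoDiv two_pi_pos 0 (y + θ), ?_⟩
    rw [toIcoMod]
    simp only [neg_smul]
    ring
  · rintro ⟨hx, hmem⟩
    refine ⟨_, hmem, ?_⟩
    rw [wrapAdd_eq_toIcoMod hθ (hXs hmem)]
    refine (toIcoMod_eq_iff _).2 ⟨by simpa using hx, -toIcoDiv two_pi_pos 0 (x - θ), ?_⟩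
    rw [toIcoMod]
    simp only [neg_smul]
    ring

/-- The pairs `(θ, x)` with `x ∈ X ⊕ θ`, when `X ⊆ [0, 2π)` and `θ ∈ [0, 2π)`. -/
def wrapAddRel (X : Set ℝ) : Set (ℝ × ℝ) :=
  {p | p.2 ∈ Ico 0 (2 * π) ∧ toIcoMod two_pi_pos 0 (p.2 - p.1) ∈ X}

lemma measurableSet_wrapAddRel {X : Set ℝ} (hX : MeasurableSet X) :
    MeasurableSet (wrapAddRel X) :=
  (measurable_snd measurableSet_Ico).inter
    ((measurable_toIcoMod two_pi_pos 0).comp (measurable_snd.sub measurable_fst) hX)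

lemma prodMk_preimage_wrapAddRel {X : Set ℝ} (hXs : X ⊆ Ico 0 (2 * π)) {θ : ℝ}
    (hθ : θ ∈ Ico 0 (2 * π)) : Prod.mk θ ⁻¹' wrapAddRel X = wrapAdd θ '' X := by
  ext x
  exact (mem_wrapAdd_image_iff hXs hθ).symm

lemma Function.Periodic.setIntegral_Ico_comp_sub_left {E : Type*} [NormedAddCommGroup E]
    [NormedSpace ℝ E] {G : ℝ → E} {T : ℝ} (hG : Function.Periodic G T) (hT : 0 ≤ T) (x : ℝ) :
    ∫ θ in Ico 0 T, G (x - θ) = ∫ y in Ico 0 T, G y := by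
  rw [integral_Ico_eq_integral_Ioc, integral_Ico_eq_integral_Ioc,
    ← intervalIntegral.integral_of_le hT, ← intervalIntegral.integral_of_le hT,
    intervalIntegral.integral_comp_sub_left, sub_zero]
  simpa only [sub_add_cancel, zero_add] using hG.intervalIntegral_add_eq (x - T) 0

lemma setIntegral_cexp_neg_of_toIcoMod_sub_mem {X : Set ℝ} (hX : MeasurableSet X)
    (hXs : X ⊆ Ico 0 (2 * π)) (q : ℤ) (x : ℝ) :
    ∫ θ in {θ | toIcoMod two_pi_pos 0 (x - θ) ∈ X}, cexp (-(I * q * θ))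
        ∂volume.restrict (Ico 0 (2 * π)) =
      cexp (-(I * q * x)) * ∫ y in X, cexp (I * q * y) := by
  set G : ℝ → ℂ := fun y => X.indicator (fun y => cexp (I * q * y)) (toIcoMod two_pi_pos 0 y)
  have hG : Function.Periodic G (2 * π) := fun y => by simp only [G, toIcoMod_add_right]
  have hshift (θ : ℝ) : {θ | toIcoMod two_pi_pos 0 (x - θ) ∈ X}.indicator
      (fun θ => cexp (-(I * q * θ))) θ = cexp (-(I * q * x)) * G (x - θ) := by
    by_cases h : toIcoMod two_pi_pos 0 (x - θ) ∈ X
    · simp only [G, indicator, mem_ofPred_eq, h, ↓reduceIte]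
      rw [cexp_I_mul_intCast_mul_toIcoMod, ← Complex.exp_add]
      push_cast
      ring_nf
    · simp only [G, indicator, mem_ofPred_eq, h, ↓reduceIte, mul_zero]
  have hIco : ∫ y in Ico 0 (2 * π), G y = ∫ y in X, cexp (I * q * y) := by
    rw [← integral_indicator hX, ← integral_indicator measurableSet_Ico]
    refine integral_congr_ae (Filter.Eventually.of_forall fun y => ?_)
    by_cases hy : y ∈ Ico 0 (2 * π)
    · have : toIcoMod two_pi_pos 0 y = y := (toIcoMod_eq_self _).2 (by rwa [zero_add])
      simp only [indicator_of_mem hy, G, this]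
    · rw [indicator_of_notMem hy, indicator_of_notMem (fun h => hy (hXs h))]
  have hT : MeasurableSet {θ : ℝ | toIcoMod two_pi_pos 0 (x - θ) ∈ X} :=
    (measurable_toIcoMod two_pi_pos 0).comp (measurable_const.sub measurable_id) hX
  rw [← integral_indicator hT]
  simp only [hshift]
  rw [integral_const_mul, hG.setIntegral_Ico_comp_sub_left two_pi_pos.le, hIco]

section Fubini

variable {α β E : Type*} [MeasurableSpace α] [MeasurableSpace β] [NormedAddCommGroup E]
  [NormedSpace ℝ E] [CompleteSpace E] {μ : Measure α} {ν : Measure β} {S : Set (α × β)} {g : α → E}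

lemma integral_indicator_comp_fst_prodMk (hS : MeasurableSet S) (a : α) :
    ∫ b, S.indicator (fun z => g z.1) (a, b) ∂ν = ν.real (Prod.mk a ⁻¹' S) • g a :=
  integral_indicator_const (g a) (measurable_prodMk_left hS)

variable [IsFiniteMeasure ν]

lemma integrable_measureReal_prodMk_preimage_smul (hS : MeasurableSet S) (hg : Integrable g μ) :
    Integrable (fun a => ν.real (Prod.mk a ⁻¹' S) • g a) μ := by
  simpa only [integral_indicator_comp_fst_prodMk hS] using
    ((hg.comp_fst ν).indicator hS).integral_prod_left

lemma integral_measureReal_prodMk_preimage_smul [SFinite μ] (hS : MeasurableSet S)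
    (hg : Integrable g μ) :
    ∫ a, ν.real (Prod.mk a ⁻¹' S) • g a ∂μ = ∫ b, ∫ a in (·, b) ⁻¹' S, g a ∂μ ∂ν := by
  have hint := (hg.comp_fst ν).indicator hS
  calc ∫ a, ν.real (Prod.mk a ⁻¹' S) • g a ∂μ
      = ∫ a, ∫ b, S.indicator (fun z => g z.1) (a, b) ∂ν ∂μ := by
        simp only [integral_indicator_comp_fst_prodMk hS]
    _ = ∫ b, ∫ a, S.indicator (fun z => g z.1) (a, b) ∂μ ∂ν := by
        rw [← integral_prod _ hint, integral_prod_symm _ hint]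
    _ = ∫ b, ∫ a in (·, b) ⁻¹' S, g a ∂μ ∂ν := by
        simp only [← integral_indicator (measurable_prodMk_right hS)]
        rfl

end Fubini

lemma integrableOn_cexp_neg_I_mul_Ico (q : ℤ) :
    IntegrableOn (fun θ : ℝ => cexp (-(I * q * θ))) (Ico 0 (2 * π)) :=
  ((by fun_prop : Continuous fun θ : ℝ => cexp (-(I * q * θ))).integrableOn_Icc).mono_set
    Ico_subset_Icc_self

lemma prodMk_right_preimage_wrapAddRel {X : Set ℝ} {x : ℝ} (hx : x ∈ Ico 0 (2 * π)) :
    (·, x) ⁻¹' wrapAddRel X = {θ | toIcoMod two_pi_pos 0 (x - θ) ∈ X} := by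
  ext θ
  exact and_iff_right hx

lemma prodMk_right_preimage_wrapAddRel_of_notMem {X : Set ℝ} {x : ℝ}
    (hx : x ∉ Ico 0 (2 * π)) : (·, x) ⁻¹' wrapAddRel X = ∅ :=
  eq_empty_of_forall_notMem fun _ hθ => hx hθ.1

section FiniteMeasure

variable {X : Set ℝ} (μ : Measure ℝ) [IsFiniteMeasure μ] (q : ℤ)

lemma integrableOn_measureReal_wrapAdd_smul (hX : MeasurableSet X) (hXs : X ⊆ Ico 0 (2 * π)) :
    IntegrableOn (fun θ => μ.real (wrapAdd θ '' X) • cexp (-(I * q * θ))) (Ico 0 (2 * π)) := by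
  refine (integrable_measureReal_prodMk_preimage_smul (ν := μ) (measurableSet_wrapAddRel hX)
    (integrableOn_cexp_neg_I_mul_Ico q)).congr ?_
  refine ae_restrict_of_forall_mem measurableSet_Ico fun θ hθ => ?_
  simp only [prodMk_preimage_wrapAddRel hXs hθ]

lemma integral_measureReal_wrapAdd_smul (hX : MeasurableSet X) (hXs : X ⊆ Ico 0 (2 * π)) :
    ∫ θ in Ico 0 (2 * π), μ.real (wrapAdd θ '' X) • cexp (-(I * q * θ)) =
      (∫ x in Ico 0 (2 * π), cexp (-(I * q * x)) ∂μ) * ∫ y in X, cexp (I * q * y) := by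
  calc ∫ θ in Ico 0 (2 * π), μ.real (wrapAdd θ '' X) • cexp (-(I * q * θ))
      = ∫ θ in Ico 0 (2 * π), μ.real (Prod.mk θ ⁻¹' wrapAddRel X) • cexp (-(I * q * θ)) :=
        setIntegral_congr_fun measurableSet_Ico fun θ hθ => by
          rw [prodMk_preimage_wrapAddRel hXs hθ]
    _ = ∫ x, ∫ θ in (·, x) ⁻¹' wrapAddRel X, cexp (-(I * q * θ))
          ∂volume.restrict (Ico 0 (2 * π)) ∂μ :=
        integral_measureReal_prodMk_preimage_smul (measurableSet_wrapAddRel hX)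
          (integrableOn_cexp_neg_I_mul_Ico q)
    _ = ∫ x in Ico 0 (2 * π), cexp (-(I * q * x)) * (∫ y in X, cexp (I * q * y)) ∂μ := by
        rw [← integral_indicator measurableSet_Ico]
        refine integral_congr_ae (Filter.Eventually.of_forall fun x => ?_)
        dsimp only
        by_cases hx : x ∈ Ico 0 (2 * π)
        · rw [indicator_of_mem hx, prodMk_right_preimage_wrapAddRel hx,
            setIntegral_cexp_neg_of_toIcoMod_sub_mem hX hXs]
        · rw [indicator_of_notMem hx, prodMk_right_preimage_wrapAddRel_of_notMem hx,
            Measure.restrict_empty, integral_zero_measure]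
    _ = _ := integral_mul_const _ _

end FiniteMeasure

lemma measurableSet_wrapAdd_image {X : Set ℝ} (hX : MeasurableSet X) (hXs : X ⊆ Ico 0 (2 * π))
    {θ : ℝ} (hθ : θ ∈ Ico 0 (2 * π)) : MeasurableSet (wrapAdd θ '' X) :=
  prodMk_preimage_wrapAddRel hXs hθ ▸ measurable_prodMk_left (measurableSet_wrapAddRel hX)

lemma ComplexMeasure.exists_eq_sum_measureReal {α : Type*} [MeasurableSpace α]
    (ν : ComplexMeasure α) : ∃ (μ : Fin 4 → Measure α) (w : Fin 4 → ℂ),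
      (∀ i, IsFiniteMeasure (μ i)) ∧ ∀ A, MeasurableSet A → ν A = ∑ i, w i * (μ i).real A := by
  set re := (ComplexMeasure.re ν).toJordanDecomposition
  set im := (ComplexMeasure.im ν).toJordanDecomposition
  refine ⟨![re.posPart, re.negPart, im.posPart, im.negPart], ![1, -1, I, -I], ?_, fun A hA => ?_⟩
  · intro i
    fin_cases i <;> dsimp <;> infer_instance
  · have hre : (ν A).re = re.posPart.real A - re.negPart.real A :=
      (ComplexMeasure.re ν).apply_eq_posPart_real_sub_negPart_real hA
    have him : (ν A).im = im.posPart.real A - im.negPart.real A :=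
      (ComplexMeasure.im ν).apply_eq_posPart_real_sub_negPart_real hA
    rw [← re_add_im (ν A), hre, him]
    simp only [Fin.sum_univ_four, Matrix.cons_val]
    push_cast
    ring

lemma ComplexMeasure.exists_integral_apply_wrapAdd_mul (ν : ComplexMeasure ℝ) (q : ℤ) :
    ∃ c : ℂ, (q = 0 → c = ν (Ico 0 (2 * π))) ∧
      ∀ X : Set ℝ, MeasurableSet X → X ⊆ Ico 0 (2 * π) →
        ∫ θ in Ico 0 (2 * π), ν (wrapAdd θ '' X) * cexp (-(I * q * θ)) =
          c * ∫ y in X, cexp (I * q * y) := by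
  obtain ⟨μ, w, hμ, hν⟩ := ComplexMeasure.exists_eq_sum_measureReal ν
  refine ⟨∑ i, w i * ∫ x in Ico 0 (2 * π), cexp (-(I * q * x)) ∂μ i, ?_, fun X hX hXs => ?_⟩
  · rintro rfl
    simp [hν _ measurableSet_Ico]
  calc ∫ θ in Ico 0 (2 * π), ν (wrapAdd θ '' X) * cexp (-(I * q * θ))
      = ∫ θ in Ico 0 (2 * π), ∑ i, w i * (μ i).real (wrapAdd θ '' X) • cexp (-(I * q * θ)) :=
        setIntegral_congr_fun measurableSet_Ico fun θ hθ => by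
          simp only [hν _ (measurableSet_wrapAdd_image hX hXs hθ), Finset.sum_mul,
            real_smul, mul_assoc]
    _ = ∑ i, w i * ∫ θ in Ico 0 (2 * π), (μ i).real (wrapAdd θ '' X) • cexp (-(I * q * θ)) := by
        rw [integral_finsetSum _ fun i _ =>
          (integrableOn_measureReal_wrapAdd_smul (μ i) q hX hXs).const_mul (w i)]
        simp only [integral_const_mul]
    _ = _ := by
        rw [Finset.sum_mul]
        refine Finset.sum_congr rfl fun i _ => ?_
        rw [integral_measureReal_wrapAdd_smul (μ i) q hX hXs, mul_assoc]

/-- If `ν_q` is a σ-additive complex set function on the Borel sets of `[0, 2π)` with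
`ν_q(X ⊕ θ) = e^{iqθ} ν_q(X)` and `ν_q([0,2π)) = δ_{0,q}`, then
`ν_q(X) = c_q (2π)⁻¹ ∫_X e^{iqθ} dθ` for some constant `c_q`, with `c_0 = 1`. -/
theorem covariant_set_function_eq_c_mul_integral (q : ℤ)
    (ν : VectorMeasure ℝ ℂ)
    (hcov : ∀ X : Set ℝ, MeasurableSet X → X ⊆ Set.Ico 0 (2 * Real.pi) →
      ∀ θ ∈ Set.Ico (0 : ℝ) (2 * Real.pi),
        ν (wrapAdd θ '' X) = Complex.exp (Complex.I * (q : ℂ) * (θ : ℂ)) * ν X)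
    (hnorm : ν (Set.Ico 0 (2 * Real.pi)) = if q = 0 then 1 else 0) :
    ∃ c : ℂ, (q = 0 → c = 1) ∧
      ∀ X : Set ℝ, MeasurableSet X → X ⊆ Set.Ico 0 (2 * Real.pi) →
        ν X = c * (2 * Real.pi : ℂ)⁻¹ *
          ∫ θ in X, Complex.exp (Complex.I * (q : ℂ) * (θ : ℂ)) := by
  obtain ⟨c, hc0, hc⟩ := ComplexMeasure.exists_integral_apply_wrapAdd_mul ν q
  refine ⟨c, fun hq => by rw [hc0 hq, hnorm, if_pos hq], fun X hX hXs => ?_⟩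
  have hinvariant : ∫ θ in Ico 0 (2 * π), ν (wrapAdd θ '' X) * cexp (-(I * q * θ)) =
      2 * π * ν X := by
    rw [setIntegral_congr_fun measurableSet_Ico fun θ hθ => by
      rw [hcov X hX hXs θ hθ, mul_right_comm, ← Complex.exp_add, add_neg_cancel,
        Complex.exp_zero, one_mul]]
    simp [Real.volume_real_Ico, two_pi_pos.le]
  have hkey := hc X hX hXs
  rw [hinvariant] at hkey
  field_simp
  linear_combination hkey
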